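/- Let η ∈ {+1, −1} and let x, y, h₁, h₂ > 0 be such that b := −η·(y/(h₁x))^{1/3} + η·(x/(h₂y))^{1/3} > 0, and set f(x, y, h₁, h₂) = b^{3/2}. Then: (i) ∂f/∂x = (η/2)·b^{1/2}·( (y/(h₁x⁴))^{1/3} + (h₂x²y)^{−1/3} ); (ii) ∂²f/∂x² = (1/12)·b^{−1/2}·( 9y^{2/3}/(h₁^{2/3}x^{8/3}) − 2/((h₁h₂)^{1/3}x²) − 3/(h₂^{2/3}x^{4/3}y^{2/3}) ); (iii) ∂²f/∂x∂y = −(1/12)·b^{−1/2}·( 3/(h₁²x⁵y)^{1/3} + 3/(h₂²xy⁵)^{1/3} − 2/((h₁h₂)^{1/3}xy) ); (iv) ∂³f/∂x²∂y = (η/72)·b^{−3/2}·( 9/(h₂xy²) + 43/(h₁^{2/3}h₂^{1/3}x^{7/3}y^{2/3}) − 17/(h₁^{1/3}h₂^{2/3}x^{5/3}y^{4/3}) − 27/(h₁x³) ). -/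

import Mathlib

/-- The model phase function
`f(x, y, h₁, h₂) = (−η(y/(h₁x))^{1/3} + η(x/(h₂y))^{1/3})^{3/2}`. -/
noncomputable def fPhase (η h₁ h₂ x y : ℝ) : ℝ :=
  (-η * (y / (h₁ * x)) ^ ((1 : ℝ) / 3) + η * (x / (h₂ * y)) ^ ((1 : ℝ) / 3)) ^ ((3 : ℝ) / 2)

/-!
Write `α = (y/(h₁x))^{1/3}` (`cbrtRatio h₁ y x`) and `γ = (x/(h₂y))^{1/3}` (`cbrtRatio h₂ x y`),
so that `f = b^{3/2}` with `b = η(γ − α)`. Being monomials in `x^{1/3}, y^{1/3}`, they satisfy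
`x ∂ₓ α = −α/3`, `x ∂ₓ γ = γ/3`, `y ∂_y α = α/3`, `y ∂_y γ = −γ/3`. Hence each derivative of `f`
is a power of `b` times a polynomial in `α, γ` over a monomial in `x, y`, and that polynomial is
simplified using only `b = η(γ − α)` and `η² = 1`. After substituting `x = U³, y = V³, h₁ = P³,
h₂ = Q³`, the fractional powers in the stated formulas, as well as `α = V/(PU)` and
`γ = U/(QV)`, are rational functions of `U, V, P, Q`, which identifies the two forms.
-/

open Real Topology

theorem rpow_eq_mul_rpow_sub_one {b : ℝ} (hb : 0 < b) (r : ℝ) : b ^ r = b * b ^ (r - 1) := by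
  rw [rpow_sub_one hb.ne']
  field_simp

theorem exists_pos_pow_eq {x : ℝ} (hx : 0 < x) {n : ℕ} (hn : n ≠ 0) : ∃ u, 0 < u ∧ u ^ n = x :=
  ⟨x ^ (n⁻¹ : ℝ), by positivity, rpow_inv_natCast_pow hx.le hn⟩

noncomputable def cbrtRatio (c u v : ℝ) : ℝ := (u / (c * v)) ^ ((1 : ℝ) / 3)

section CbrtRatio

variable {c u v : ℝ}

theorem cbrtRatio_pow_three (hc : 0 ≤ c) (hu : 0 ≤ u) (hv : 0 ≤ v) :
    cbrtRatio (c ^ 3) (u ^ 3) (v ^ 3) = u / (c * v) := by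
  rw [cbrtRatio, ← mul_pow, ← div_pow, show (1 : ℝ) / 3 = ((3 : ℕ)⁻¹ : ℝ) by norm_num,
    pow_rpow_inv_natCast (by positivity) three_ne_zero]

theorem hasDerivAt_cbrtRatio_left (hc : 0 < c) (hu : 0 < u) (hv : 0 < v) :
    HasDerivAt (fun u => cbrtRatio c u v) (cbrtRatio c u v / (3 * u)) u := by
  have h : HasDerivAt (fun u => u / (c * v)) (1 / (c * v)) u := (hasDerivAt_id' u).div_const _
  refine (h.rpow_const (p := 1 / 3) (Or.inl (by positivity))).congr_deriv ?_
  rw [rpow_sub_one (by positivity), cbrtRatio]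
  field_simp

theorem hasDerivAt_cbrtRatio_right (hc : 0 < c) (hu : 0 < u) (hv : 0 < v) :
    HasDerivAt (fun v => cbrtRatio c u v) (-cbrtRatio c u v / (3 * v)) v := by
  have h : HasDerivAt (fun v => u / (c * v)) (-(u * c) / (c * v) ^ 2) v := by
    simpa using (hasDerivAt_const v u).fun_div ((hasDerivAt_id' v).const_mul c) (by positivity)
  refine (h.rpow_const (p := 1 / 3) (Or.inl (by positivity))).congr_deriv ?_
  rw [rpow_sub_one (by positivity), cbrtRatio]
  field_simp

end CbrtRatio

noncomputable def fPhaseBase (η h₁ h₂ s t : ℝ) : ℝ :=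
  -η * cbrtRatio h₁ t s + η * cbrtRatio h₂ s t

noncomputable def fPhaseDx (η h₁ h₂ s t : ℝ) : ℝ :=
  η / 2 * fPhaseBase η h₁ h₂ s t ^ ((1 : ℝ) / 2) * ((cbrtRatio h₁ t s + cbrtRatio h₂ s t) / s)

noncomputable def fPhaseDxx (η h₁ h₂ s t : ℝ) : ℝ :=
  1 / 12 * fPhaseBase η h₁ h₂ s t ^ (-(1 : ℝ) / 2) *
    ((9 * cbrtRatio h₁ t s ^ 2 - 2 * cbrtRatio h₁ t s * cbrtRatio h₂ s t
      - 3 * cbrtRatio h₂ s t ^ 2) / s ^ 2)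

noncomputable def fPhaseDxDy (η h₁ h₂ s t : ℝ) : ℝ :=
  -(1 / 12) * fPhaseBase η h₁ h₂ s t ^ (-(1 : ℝ) / 2) *
    ((3 * cbrtRatio h₁ t s ^ 2 + 3 * cbrtRatio h₂ s t ^ 2
      - 2 * cbrtRatio h₁ t s * cbrtRatio h₂ s t) / (s * t))

noncomputable def fPhaseDxxDy (η h₁ h₂ s t : ℝ) : ℝ :=
  η / 72 * fPhaseBase η h₁ h₂ s t ^ (-(3 : ℝ) / 2) *
    ((9 * cbrtRatio h₂ s t ^ 3 + 43 * cbrtRatio h₁ t s ^ 2 * cbrtRatio h₂ s t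
      - 17 * cbrtRatio h₁ t s * cbrtRatio h₂ s t ^ 2 - 27 * cbrtRatio h₁ t s ^ 3)
    / (s ^ 2 * t))

section Derivatives

variable {η h₁ h₂ s t : ℝ}

theorem hasDerivAt_fPhaseBase_left (hh₁ : 0 < h₁) (hh₂ : 0 < h₂) (hs : 0 < s) (ht : 0 < t) :
    HasDerivAt (fun s => fPhaseBase η h₁ h₂ s t)
      (η * (cbrtRatio h₁ t s + cbrtRatio h₂ s t) / (3 * s)) s :=
  (((hasDerivAt_cbrtRatio_right hh₁ ht hs).const_mul (-η)).add
    ((hasDerivAt_cbrtRatio_left hh₂ hs ht).const_mul η)).congr_deriv (by ring)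

theorem hasDerivAt_fPhaseBase_right (hh₁ : 0 < h₁) (hh₂ : 0 < h₂) (hs : 0 < s) (ht : 0 < t) :
    HasDerivAt (fun t => fPhaseBase η h₁ h₂ s t)
      (-η * (cbrtRatio h₁ t s + cbrtRatio h₂ s t) / (3 * t)) t :=
  (((hasDerivAt_cbrtRatio_left hh₁ ht hs).const_mul (-η)).add
    ((hasDerivAt_cbrtRatio_right hh₂ hs ht).const_mul η)).congr_deriv (by ring)

theorem hasDerivAt_fPhase_left (hh₁ : 0 < h₁) (hh₂ : 0 < h₂) (hs : 0 < s) (ht : 0 < t)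
    (hb : 0 < fPhaseBase η h₁ h₂ s t) :
    HasDerivAt (fun s => fPhase η h₁ h₂ s t) (fPhaseDx η h₁ h₂ s t) s := by
  refine ((hasDerivAt_fPhaseBase_left hh₁ hh₂ hs ht).rpow_const
    (p := 3 / 2) (Or.inl hb.ne')).congr_deriv ?_
  rw [fPhaseDx, show (3 / 2 - 1 : ℝ) = 1 / 2 by norm_num]
  field_simp

theorem hasDerivAt_fPhaseDx_left (hη : η = 1 ∨ η = -1) (hh₁ : 0 < h₁) (hh₂ : 0 < h₂)
    (hs : 0 < s) (ht : 0 < t) (hb : 0 < fPhaseBase η h₁ h₂ s t) :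
    HasDerivAt (fun s => fPhaseDx η h₁ h₂ s t) (fPhaseDxx η h₁ h₂ s t) s := by
  have hR := (hasDerivAt_fPhaseBase_left hh₁ hh₂ hs ht).rpow_const (p := 1 / 2) (Or.inl hb.ne')
  have hS := (hasDerivAt_cbrtRatio_right hh₁ ht hs).fun_add (hasDerivAt_cbrtRatio_left hh₂ hs ht)
  refine ((hR.const_mul (η / 2)).fun_mul (hS.fun_div (hasDerivAt_id' s) hs.ne')).congr_deriv ?_
  rw [fPhaseDxx, rpow_eq_mul_rpow_sub_one hb (1 / 2), show (1 / 2 - 1 : ℝ) = -1 / 2 by norm_num]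
  unfold fPhaseBase
  rcases hη with rfl | rfl <;> field_simp <;> ring

theorem hasDerivAt_fPhaseDx_right (hη : η = 1 ∨ η = -1) (hh₁ : 0 < h₁) (hh₂ : 0 < h₂)
    (hs : 0 < s) (ht : 0 < t) (hb : 0 < fPhaseBase η h₁ h₂ s t) :
    HasDerivAt (fun t => fPhaseDx η h₁ h₂ s t) (fPhaseDxDy η h₁ h₂ s t) t := by
  have hR := (hasDerivAt_fPhaseBase_right hh₁ hh₂ hs ht).rpow_const (p := 1 / 2) (Or.inl hb.ne')
  have hS := (hasDerivAt_cbrtRatio_left hh₁ ht hs).fun_add (hasDerivAt_cbrtRatio_right hh₂ hs ht)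
  refine ((hR.const_mul (η / 2)).fun_mul (hS.div_const s)).congr_deriv ?_
  rw [fPhaseDxDy, rpow_eq_mul_rpow_sub_one hb (1 / 2), show (1 / 2 - 1 : ℝ) = -1 / 2 by norm_num]
  unfold fPhaseBase
  rcases hη with rfl | rfl <;> field_simp <;> ring

theorem hasDerivAt_fPhaseDxx_right (hη : η = 1 ∨ η = -1) (hh₁ : 0 < h₁) (hh₂ : 0 < h₂)
    (hs : 0 < s) (ht : 0 < t) (hb : 0 < fPhaseBase η h₁ h₂ s t) :
    HasDerivAt (fun t => fPhaseDxx η h₁ h₂ s t) (fPhaseDxxDy η h₁ h₂ s t) t := by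
  have hW := (hasDerivAt_fPhaseBase_right hh₁ hh₂ hs ht).rpow_const (p := -1 / 2) (Or.inl hb.ne')
  have hA := hasDerivAt_cbrtRatio_left hh₁ ht hs
  have hB := hasDerivAt_cbrtRatio_right hh₂ hs ht
  have hQ := (((hA.fun_pow 2).const_mul 9).fun_sub ((hA.const_mul 2).fun_mul hB)).fun_sub
    ((hB.fun_pow 2).const_mul 3)
  refine ((hW.const_mul (1 / 12)).fun_mul (hQ.div_const (s ^ 2))).congr_deriv ?_
  rw [fPhaseDxxDy, rpow_eq_mul_rpow_sub_one hb (-1 / 2), show (-1 / 2 - 1 : ℝ) = -3 / 2 by norm_num]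
  unfold fPhaseBase
  rcases hη with rfl | rfl <;> field_simp <;> ring

theorem eventually_fPhaseBase_pos_left (hh₁ : 0 < h₁) (hh₂ : 0 < h₂) (hs : 0 < s) (ht : 0 < t)
    (hb : 0 < fPhaseBase η h₁ h₂ s t) :
    ∀ᶠ s' in 𝓝 s, 0 < s' ∧ 0 < fPhaseBase η h₁ h₂ s' t :=
  (eventually_gt_nhds hs).and
    ((hasDerivAt_fPhaseBase_left hh₁ hh₂ hs ht).continuousAt.eventually (eventually_gt_nhds hb))

theorem eventually_fPhaseBase_pos_right (hh₁ : 0 < h₁) (hh₂ : 0 < h₂) (hs : 0 < s) (ht : 0 < t)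
    (hb : 0 < fPhaseBase η h₁ h₂ s t) :
    ∀ᶠ t' in 𝓝 t, 0 < t' ∧ 0 < fPhaseBase η h₁ h₂ s t' :=
  (eventually_gt_nhds ht).and
    ((hasDerivAt_fPhaseBase_right hh₁ hh₂ hs ht).continuousAt.eventually (eventually_gt_nhds hb))

theorem deriv_fPhase_left (hh₁ : 0 < h₁) (hh₂ : 0 < h₂) (hs : 0 < s) (ht : 0 < t)
    (hb : 0 < fPhaseBase η h₁ h₂ s t) :
    deriv (fun s => fPhase η h₁ h₂ s t) s = fPhaseDx η h₁ h₂ s t :=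
  (hasDerivAt_fPhase_left hh₁ hh₂ hs ht hb).deriv

theorem iteratedDeriv_two_fPhase_left (hη : η = 1 ∨ η = -1) (hh₁ : 0 < h₁) (hh₂ : 0 < h₂)
    (hs : 0 < s) (ht : 0 < t) (hb : 0 < fPhaseBase η h₁ h₂ s t) :
    iteratedDeriv 2 (fun s => fPhase η h₁ h₂ s t) s = fPhaseDxx η h₁ h₂ s t := by
  have hDx : deriv (fun s => fPhase η h₁ h₂ s t) =ᶠ[𝓝 s] fun s => fPhaseDx η h₁ h₂ s t := by
    filter_upwards [eventually_fPhaseBase_pos_left hh₁ hh₂ hs ht hb] with s' ⟨hs', hb'⟩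
    exact deriv_fPhase_left hh₁ hh₂ hs' ht hb'
  rw [iteratedDeriv_succ, iteratedDeriv_one, hDx.deriv_eq]
  exact (hasDerivAt_fPhaseDx_left hη hh₁ hh₂ hs ht hb).deriv

theorem deriv_right_deriv_fPhase_left (hη : η = 1 ∨ η = -1) (hh₁ : 0 < h₁) (hh₂ : 0 < h₂)
    (hs : 0 < s) (ht : 0 < t) (hb : 0 < fPhaseBase η h₁ h₂ s t) :
    deriv (fun t => deriv (fun s => fPhase η h₁ h₂ s t) s) t = fPhaseDxDy η h₁ h₂ s t := by
  have hDx : (fun t => deriv (fun s => fPhase η h₁ h₂ s t) s) =ᶠ[𝓝 t]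
      fun t => fPhaseDx η h₁ h₂ s t := by
    filter_upwards [eventually_fPhaseBase_pos_right hh₁ hh₂ hs ht hb] with t' ⟨ht', hb'⟩
    exact deriv_fPhase_left hh₁ hh₂ hs ht' hb'
  rw [hDx.deriv_eq]
  exact (hasDerivAt_fPhaseDx_right hη hh₁ hh₂ hs ht hb).deriv

theorem deriv_right_iteratedDeriv_two_fPhase_left (hη : η = 1 ∨ η = -1) (hh₁ : 0 < h₁)
    (hh₂ : 0 < h₂) (hs : 0 < s) (ht : 0 < t) (hb : 0 < fPhaseBase η h₁ h₂ s t) :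
    deriv (fun t => iteratedDeriv 2 (fun s => fPhase η h₁ h₂ s t) s) t
      = fPhaseDxxDy η h₁ h₂ s t := by
  have hDxx : (fun t => iteratedDeriv 2 (fun s => fPhase η h₁ h₂ s t) s) =ᶠ[𝓝 t]
      fun t => fPhaseDxx η h₁ h₂ s t := by
    filter_upwards [eventually_fPhaseBase_pos_right hh₁ hh₂ hs ht hb] with t' ⟨ht', hb'⟩
    exact iteratedDeriv_two_fPhase_left hη hh₁ hh₂ hs ht' hb'
  rw [hDxx.deriv_eq]
  exact (hasDerivAt_fPhaseDxx_right hη hh₁ hh₂ hs ht hb).deriv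

end Derivatives

section CubeCoordinates

variable {U V P Q : ℝ}

theorem dx_monomials_cube (hU : 0 < U) (hV : 0 < V) (hP : 0 < P) (hQ : 0 < Q) :
    (V ^ 3 / (P ^ 3 * (U ^ 3) ^ 4)) ^ ((1 : ℝ) / 3) + (Q ^ 3 * (U ^ 3) ^ 2 * V ^ 3) ^ (-(1 : ℝ) / 3)
      = (V / (P * U) + U / (Q * V)) / U ^ 3 := by
  simp (disch := positivity) only [neg_div, rpow_neg, div_rpow, mul_rpow, ← pow_mul,
    ← rpow_natCast_mul]
  norm_num
  field_simp

theorem dxx_monomials_cube (hU : 0 < U) (hV : 0 < V) (hP : 0 < P) (hQ : 0 < Q) :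
    9 * (V ^ 3) ^ ((2 : ℝ) / 3) / ((P ^ 3) ^ ((2 : ℝ) / 3) * (U ^ 3) ^ ((8 : ℝ) / 3))
        - 2 / ((P ^ 3 * Q ^ 3) ^ ((1 : ℝ) / 3) * (U ^ 3) ^ 2)
        - 3 / ((Q ^ 3) ^ ((2 : ℝ) / 3) * (U ^ 3) ^ ((4 : ℝ) / 3) * (V ^ 3) ^ ((2 : ℝ) / 3))
      = (9 * (V / (P * U)) ^ 2 - 2 * (V / (P * U)) * (U / (Q * V)) - 3 * (U / (Q * V)) ^ 2)
        / (U ^ 3) ^ 2 := by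
  simp (disch := positivity) only [mul_rpow, ← rpow_natCast_mul]
  norm_num
  field_simp

theorem dxdy_monomials_cube (hU : 0 < U) (hV : 0 < V) (hP : 0 < P) (hQ : 0 < Q) :
    3 / ((P ^ 3) ^ 2 * (U ^ 3) ^ 5 * V ^ 3) ^ ((1 : ℝ) / 3)
        + 3 / ((Q ^ 3) ^ 2 * U ^ 3 * (V ^ 3) ^ 5) ^ ((1 : ℝ) / 3)
        - 2 / ((P ^ 3 * Q ^ 3) ^ ((1 : ℝ) / 3) * U ^ 3 * V ^ 3)
      = (3 * (V / (P * U)) ^ 2 + 3 * (U / (Q * V)) ^ 2 - 2 * (V / (P * U)) * (U / (Q * V)))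
        / (U ^ 3 * V ^ 3) := by
  simp (disch := positivity) only [mul_rpow, ← pow_mul, ← rpow_natCast_mul]
  norm_num
  field_simp

theorem dxxdy_monomials_cube (hU : 0 < U) (hV : 0 < V) (hP : 0 < P) (hQ : 0 < Q) :
    9 / (Q ^ 3 * U ^ 3 * (V ^ 3) ^ 2)
        + 43 / ((P ^ 3) ^ ((2 : ℝ) / 3) * (Q ^ 3) ^ ((1 : ℝ) / 3) * (U ^ 3) ^ ((7 : ℝ) / 3)
          * (V ^ 3) ^ ((2 : ℝ) / 3))
        - 17 / ((P ^ 3) ^ ((1 : ℝ) / 3) * (Q ^ 3) ^ ((2 : ℝ) / 3) * (U ^ 3) ^ ((5 : ℝ) / 3)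
          * (V ^ 3) ^ ((4 : ℝ) / 3))
        - 27 / (P ^ 3 * (U ^ 3) ^ 3)
      = (9 * (U / (Q * V)) ^ 3 + 43 * (V / (P * U)) ^ 2 * (U / (Q * V))
          - 17 * (V / (P * U)) * (U / (Q * V)) ^ 2 - 27 * (V / (P * U)) ^ 3)
        / ((U ^ 3) ^ 2 * V ^ 3) := by
  simp (disch := positivity) only [← rpow_natCast_mul]
  norm_num
  field_simp

end CubeCoordinates

/-- First, second and third partial derivatives of the model phase function
arising from the cube-root phases of GL(3) Voronoi summation. -/
theorem fPhase_derivs (η : ℝ) (hη : η = 1 ∨ η = -1)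
    (x y h₁ h₂ : ℝ) (hx : 0 < x) (hy : 0 < y) (hh₁ : 0 < h₁) (hh₂ : 0 < h₂)
    (hb : 0 < -η * (y / (h₁ * x)) ^ ((1 : ℝ) / 3) + η * (x / (h₂ * y)) ^ ((1 : ℝ) / 3)) :
    (deriv (fun s : ℝ => fPhase η h₁ h₂ s y) x
        = η / 2 *
          (-η * (y / (h₁ * x)) ^ ((1 : ℝ) / 3)
            + η * (x / (h₂ * y)) ^ ((1 : ℝ) / 3)) ^ ((1 : ℝ) / 2) *
          ((y / (h₁ * x ^ 4)) ^ ((1 : ℝ) / 3) + (h₂ * x ^ 2 * y) ^ (-(1 : ℝ) / 3))) ∧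
    (iteratedDeriv 2 (fun s : ℝ => fPhase η h₁ h₂ s y) x
        = 1 / 12 *
          (-η * (y / (h₁ * x)) ^ ((1 : ℝ) / 3)
            + η * (x / (h₂ * y)) ^ ((1 : ℝ) / 3)) ^ (-(1 : ℝ) / 2) *
          (9 * y ^ ((2 : ℝ) / 3) / (h₁ ^ ((2 : ℝ) / 3) * x ^ ((8 : ℝ) / 3))
            - 2 / ((h₁ * h₂) ^ ((1 : ℝ) / 3) * x ^ 2)
            - 3 / (h₂ ^ ((2 : ℝ) / 3) * x ^ ((4 : ℝ) / 3) * y ^ ((2 : ℝ) / 3)))) ∧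
    (deriv (fun t : ℝ => deriv (fun s : ℝ => fPhase η h₁ h₂ s t) x) y
        = -(1 / 12) *
          (-η * (y / (h₁ * x)) ^ ((1 : ℝ) / 3)
            + η * (x / (h₂ * y)) ^ ((1 : ℝ) / 3)) ^ (-(1 : ℝ) / 2) *
          (3 / (h₁ ^ 2 * x ^ 5 * y) ^ ((1 : ℝ) / 3)
            + 3 / (h₂ ^ 2 * x * y ^ 5) ^ ((1 : ℝ) / 3)
            - 2 / ((h₁ * h₂) ^ ((1 : ℝ) / 3) * x * y))) ∧
    (deriv (fun t : ℝ => iteratedDeriv 2 (fun s : ℝ => fPhase η h₁ h₂ s t) x) y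
        = η / 72 *
          (-η * (y / (h₁ * x)) ^ ((1 : ℝ) / 3)
            + η * (x / (h₂ * y)) ^ ((1 : ℝ) / 3)) ^ (-(3 : ℝ) / 2) *
          (9 / (h₂ * x * y ^ 2)
            + 43 / (h₁ ^ ((2 : ℝ) / 3) * h₂ ^ ((1 : ℝ) / 3) * x ^ ((7 : ℝ) / 3) * y ^ ((2 : ℝ) / 3))
            - 17 / (h₁ ^ ((1 : ℝ) / 3) * h₂ ^ ((2 : ℝ) / 3) * x ^ ((5 : ℝ) / 3) * y ^ ((4 : ℝ) / 3))
            - 27 / (h₁ * x ^ 3))) := by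
  obtain ⟨U, hU, rfl⟩ := exists_pos_pow_eq hx three_ne_zero
  obtain ⟨V, hV, rfl⟩ := exists_pos_pow_eq hy three_ne_zero
  obtain ⟨P, hP, rfl⟩ := exists_pos_pow_eq hh₁ three_ne_zero
  obtain ⟨Q, hQ, rfl⟩ := exists_pos_pow_eq hh₂ three_ne_zero
  have hα := cbrtRatio_pow_three hP.le hV.le hU.le
  have hγ := cbrtRatio_pow_three hQ.le hU.le hV.le
  refine ⟨?_, ?_, ?_, ?_⟩
  · rw [deriv_fPhase_left hh₁ hh₂ hx hy hb, fPhaseDx, hα, hγ, dx_monomials_cube hU hV hP hQ]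
    rfl
  · rw [iteratedDeriv_two_fPhase_left hη hh₁ hh₂ hx hy hb, fPhaseDxx, hα, hγ,
      dxx_monomials_cube hU hV hP hQ]
    rfl
  · rw [deriv_right_deriv_fPhase_left hη hh₁ hh₂ hx hy hb, fPhaseDxDy, hα, hγ,
      dxdy_monomials_cube hU hV hP hQ]
    rfl
  · rw [deriv_right_iteratedDeriv_two_fPhase_left hη hh₁ hh₂ hx hy hb, fPhaseDxxDy, hα, hγ,
      dxxdy_monomials_cube hU hV hP hQ]
    rfl
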